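/- Differentiation formula: (d/dx) D_n(x|a_1,…,a_r) = n! ∑_{l=0}^{n-1} ((-1)^{n-l-1}/(l!(n-l))) D_l(x|a_1,…,a_r). -/

import Mathlib

open Finset PowerSeries

/-- Exponential generating function: `∑ f n * t^n / n!`. -/
noncomputable def egf (f : ℕ → ℚ) : PowerSeries ℚ :=
  PowerSeries.mk fun n => f n / n.factorial

/-- The formal power series `log(1+t) = ∑_{m≥1} (-1)^{m-1} t^m / m`. -/
noncomputable def log1p : PowerSeries ℚ :=
  PowerSeries.mk fun n => if n = 0 then 0 else (-1) ^ (n - 1) / n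

/-- Formal exponential composition: for `f` with zero constant term this is
`exp(f) = ∑_k f^k / k!` (the sum in each coefficient is finite). -/
noncomputable def expPS (f : PowerSeries ℚ) : PowerSeries ℚ :=
  PowerSeries.mk fun n =>
    ∑ k ∈ Finset.range (n + 1), (PowerSeries.coeff n (f ^ k)) / k.factorial

/-- `(1+t)^a := exp(a · log(1+t))` as a formal power series. -/
noncomputable def onePow (a : ℚ) : PowerSeries ℚ := expPS (PowerSeries.C a * log1p)

/-- `e^{a t} = ∑ a^n t^n / n!`. -/
noncomputable def expAt (a : ℚ) : PowerSeries ℚ :=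
  PowerSeries.mk fun n => a ^ n / n.factorial

/-- Falling factorial `(x)_n = x(x-1)⋯(x-n+1)`. -/
noncomputable def ffall (x : ℚ) (n : ℕ) : ℚ := ∏ i ∈ Finset.range n, (x - i)


/-! With `E_x(t) = ∑ D_n(x) tⁿ / n!` and `P(t) = ∏ ((1+t)^{a_j} - 1)`, the hypothesis reads
`P · E_x = log(1+t)^r · (1+t)^x`. Each coefficient of `(1+t)^x` is a polynomial in `x`, and
differentiating them gives `∂ₓ (1+t)^x = log(1+t) · (1+t)^x`. Since `P` does not depend on `x`
and is nonzero (the `t`-coefficient of `(1+t)^a - 1` is `a`), differentiating the identity and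
cancelling `P` gives `∂ₓ E_x = log(1+t) · E_x`; the formula is the coefficient of `tⁿ` of this,
with `log(1+t) = ∑_{m ≥ 1} (-1)^{m-1} t^m / m`. -/

section ParametricGeneratingFunctions

variable {K : Type*} [CommRing K]

theorem coeff_mul_mk_eval (S : PowerSeries K) (Q : ℕ → Polynomial K) (m : ℕ) (x : K) :
    coeff m (S * mk fun n => (Q n).eval x) =
      (∑ p ∈ antidiagonal m, Polynomial.C (coeff p.1 S) * Q p.2).eval x := by
  simp [coeff_mul, Polynomial.eval_finsetSum]

/-- Coefficientwise, the hypothesis is an identity of polynomials in `x` (the ring `K` being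
infinite), so it survives differentiation in `x`. -/
theorem mul_mk_eval_derivative [IsDomain K] [Infinite K] {P R : PowerSeries K}
    {Q Q' : ℕ → Polynomial K}
    (h : ∀ x, (P * mk fun n => (Q n).eval x) = R * mk fun n => (Q' n).eval x) (x : K) :
    (P * mk fun n => (Polynomial.derivative (Q n)).eval x) =
      R * mk fun n => (Polynomial.derivative (Q' n)).eval x := by
  ext m
  have hpoly : ∑ p ∈ antidiagonal m, Polynomial.C (coeff p.1 P) * Q p.2 =
      ∑ p ∈ antidiagonal m, Polynomial.C (coeff p.1 R) * Q' p.2 :=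
    Polynomial.funext fun y => by rw [← coeff_mul_mk_eval, ← coeff_mul_mk_eval, h]
  simpa [coeff_mul_mk_eval, Polynomial.derivative_C_mul] using
    congrArg (fun q => (Polynomial.derivative q).eval x) hpoly

end ParametricGeneratingFunctions

theorem egf_eval_eq_mk (Q : ℕ → Polynomial ℚ) (x : ℚ) :
    egf (fun n => (Q n).eval x) = mk fun n => (Polynomial.C (n.factorial : ℚ)⁻¹ * Q n).eval x := by
  ext n
  simp [egf, div_eq_inv_mul]

theorem X_dvd_log1p : X ∣ log1p := by
  simp [X_dvd_iff, log1p]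

theorem coeff_log1p_pow_of_lt {n k : ℕ} (h : n < k) : coeff n (log1p ^ k) = 0 :=
  X_pow_dvd_iff.mp (pow_dvd_pow_of_dvd X_dvd_log1p k) n h

theorem coeff_log1p_mul (F : PowerSeries ℚ) (n : ℕ) :
    coeff n (log1p * F) = ∑ l ∈ range n, (-1) ^ (n - l - 1) / ((n - l : ℕ) : ℚ) * coeff l F := by
  rw [mul_comm, coeff_mul,
    Nat.sum_antidiagonal_eq_sum_range_succ (fun i j => coeff i F * coeff j log1p),
    sum_range_succ, Nat.sub_self]
  simp only [log1p, coeff_mk, if_pos, mul_zero, add_zero]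
  refine sum_congr rfl fun l hl => ?_
  rw [if_neg (by simp at hl; omega)]
  ring

theorem coeff_onePow_of_le (x : ℚ) {n N : ℕ} (h : n ≤ N) :
    coeff n (onePow x) = ∑ k ∈ range (N + 1), coeff n (log1p ^ k) / k.factorial * x ^ k := by
  simp only [onePow, expPS, coeff_mk, mul_pow, ← map_pow, coeff_C_mul]
  refine sum_subset (range_subset_range.mpr (by omega)) (fun k _ hk => ?_) |>.trans
    (sum_congr rfl fun k _ => by ring)
  rw [coeff_log1p_pow_of_lt (by simpa using hk)]
  simp

theorem coeff_one_onePow (a : ℚ) : coeff 1 (onePow a) = a := by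
  simp [coeff_onePow_of_le a le_rfl, sum_range_succ, log1p, coeff_one]

theorem onePow_sub_one_ne_zero {a : ℚ} (ha : a ≠ 0) : onePow a - 1 ≠ 0 := fun h => by
  simpa [coeff_one_onePow, ha] using congrArg (coeff 1) h

noncomputable def onePowCoeffPoly (n : ℕ) : Polynomial ℚ :=
  ∑ k ∈ range (n + 1), Polynomial.C (coeff n (log1p ^ k) / k.factorial) * Polynomial.X ^ k

theorem onePow_eq_mk (x : ℚ) : onePow x = mk fun n => (onePowCoeffPoly n).eval x := by
  ext n
  simp [coeff_onePow_of_le x le_rfl, onePowCoeffPoly, Polynomial.eval_finsetSum]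

theorem coeff_log1p_mul_onePow (x : ℚ) (n : ℕ) :
    coeff n (log1p * onePow x) =
      ∑ k ∈ range (n + 1), coeff n (log1p ^ (k + 1)) / k.factorial * x ^ k := by
  have hcoeff : ∀ p ∈ antidiagonal n, coeff p.1 log1p * coeff p.2 (onePow x) =
      ∑ k ∈ range (n + 1), coeff p.1 log1p * coeff p.2 (log1p ^ k) * (x ^ k / k.factorial) := by
    intro p hp
    rw [coeff_onePow_of_le x (HasAntidiagonal.antidiagonal.snd_le hp), mul_sum]
    exact sum_congr rfl fun k _ => by ring
  rw [coeff_mul, sum_congr rfl hcoeff, sum_comm]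
  refine sum_congr rfl fun k _ => ?_
  rw [← sum_mul, pow_succ', coeff_mul]
  ring

theorem mk_eval_derivative_onePowCoeffPoly (x : ℚ) :
    (mk fun n => (Polynomial.derivative (onePowCoeffPoly n)).eval x) = log1p * onePow x := by
  ext n
  simp only [coeff_mk, onePowCoeffPoly, map_sum, Polynomial.derivative_C_mul_X_pow,
    Polynomial.eval_finsetSum, Polynomial.eval_C_mul, Polynomial.eval_pow, Polynomial.eval_X]
  rw [coeff_log1p_mul_onePow, sum_range_succ', sum_range_succ, coeff_log1p_pow_of_lt n.lt_succ_self]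
  simp only [Nat.cast_zero, mul_zero, zero_mul, add_zero, zero_div]
  refine sum_congr rfl fun k _ => ?_
  rw [Nat.factorial_succ, Nat.add_sub_cancel]
  push_cast
  field_simp

theorem egf_derivative_eq_log1p_mul {P R : PowerSeries ℚ} (hP : P ≠ 0) {D : ℕ → Polynomial ℚ}
    (hD : ∀ x : ℚ, P * egf (fun n => (D n).eval x) = R * onePow x) (x : ℚ) :
    egf (fun n => (Polynomial.derivative (D n)).eval x) = log1p * egf (fun n => (D n).eval x) := by
  have hdiff := mul_mk_eval_derivative (Q := fun n => Polynomial.C (n.factorial : ℚ)⁻¹ * D n)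
    (Q' := onePowCoeffPoly) (fun y => by rw [← egf_eval_eq_mk, hD, onePow_eq_mk]) x
  simp only [Polynomial.derivative_C_mul, mk_eval_derivative_onePowCoeffPoly] at hdiff
  refine mul_left_cancel₀ hP ?_
  rw [egf_eval_eq_mk, hdiff, mul_left_comm, mul_left_comm _ log1p, hD]

theorem stmt9 (r : ℕ) (a : Fin r → ℚ) (ha : ∀ j, a j ≠ 0) (D : ℕ → Polynomial ℚ)
    (hD : ∀ x : ℚ, (∏ j, (onePow (a j) - 1)) * egf (fun n => (D n).eval x) = log1p ^ r * onePow x)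
    (n : ℕ) :
    Polynomial.derivative (D n) =
      ∑ l ∈ Finset.range n,
        Polynomial.C ((n.factorial : ℚ) * (-1) ^ (n - l - 1) /
          ((l.factorial : ℚ) * ((n - l : ℕ) : ℚ))) * D l := by
  refine Polynomial.funext fun x => ?_
  have hP : ∏ j, (onePow (a j) - 1) ≠ 0 :=
    prod_ne_zero_iff.mpr fun j _ => onePow_sub_one_ne_zero (ha j)
  have hn := congrArg (coeff n) (egf_derivative_eq_log1p_mul hP hD x)
  rw [coeff_log1p_mul] at hn
  simp only [egf, coeff_mk] at hn
  rw [div_eq_iff (by positivity)] at hn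
  rw [hn, Polynomial.eval_finsetSum, sum_mul]
  refine sum_congr rfl fun l _ => ?_
  simp only [Polynomial.eval_mul, Polynomial.eval_C]
  ring
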